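/- arXiv:1812.11162 — 2 statements merged into one kernel-verified Lean document; each statement's English description precedes it below -/
import Mathlib

section
/- For integers N > k⁴ ≥ 1, there exists a k-fold Sidon set A ⊆ {1, …, N} with |A| ≥ c · k^{-4/3} · N^{1/3}, for some absolute positive constant c. -/
def IsTrivialSol (u x : Fin 4 → ℤ) : Prop :=
  ∀ i, ∑ j ∈ Finset.univ.filter (fun j => x j = x i), u j = 0

def IsKFoldSidon (k : ℤ) (A : Set ℤ) : Prop :=
  ∀ u x : Fin 4 → ℤ, (∀ i, |u i| ≤ k) → (∑ i, u i) = 0 →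
    (∀ i, x i ∈ A) → (∑ i, u i * x i) = 0 → IsTrivialSol u x

/-
Suppose `A` is `k`-fold Sidon and `y` creates a nontrivial solution in `A ∪ {y}`. Let `v` be the
total coefficient on the slots where `y` sits. If `v = 0`, moving those slots to an element of `A`
with coefficient `0` gives a solution in `A`, which is trivial, and triviality transfers back.
Otherwise `v y` is a `k`-bounded linear form in at most three elements of `A`, so `y` lies in a set
of at most `(8k+1)(2k+1)³|A|³` obstructions. A maximal `k`-fold Sidon subset of `[1, N]` therefore
satisfies `N ≤ |A| + (8k+1)(2k+1)³|A|³ ≤ 244 k⁴ |A|³`.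
-/

open Finset

noncomputable def sidonObstructions (k : ℕ) (A : Finset ℤ) : Finset ℤ :=
  (Icc (-(4 * k : ℤ)) (4 * k) ×ˢ (Fintype.piFinset fun _ : Fin 3 => Icc (-(k : ℤ)) k) ×ˢ
      Fintype.piFinset fun _ : Fin 3 => A).image
    fun p => (∑ t, p.2.1 t * p.2.2 t) / p.1

lemma card_sidonObstructions_le (k : ℕ) (A : Finset ℤ) :
    #(sidonObstructions k A) ≤ (8 * k + 1) * (2 * k + 1) ^ 3 * #A ^ 3 := by
  refine card_image_le.trans_eq ?_
  simp only [card_product, Fintype.card_piFinset, Int.card_Icc, prod_const, card_univ,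
    Fintype.card_fin]
  rw [show (4 * k + 1 - -(4 * k) : ℤ).toNat = 8 * k + 1 by omega,
    show (k + 1 - -k : ℤ).toNat = 2 * k + 1 by omega, mul_assoc]

lemma IsTrivialSol.of_replace {u x : Fin 4 → ℤ} {y a : ℤ}
    (hv : ∑ i ∈ univ.filter (fun i => x i = y), u i = 0)
    (h : IsTrivialSol (fun i => if x i = y then 0 else u i)
      (fun i => if x i = y then a else x i)) :
    IsTrivialSol u x := by
  intro i
  by_cases hi : x i = y
  · simpa only [hi] using hv
  · have hyi : y ≠ x i := Ne.symm hi
    rw [← h i, sum_filter, sum_filter]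
    refine sum_congr rfl fun j _ => ?_
    by_cases hj : x j = y <;> simp [hi, hj, hyi]

lemma IsKFoldSidon.insert {k : ℕ} {A : Finset ℤ} (hA : IsKFoldSidon k A) {y : ℤ}
    (hy : y ∉ sidonObstructions k A) : IsKFoldSidon k ↑(insert y A) := by
  intro u x hu hsum hx hlin
  have hxA : ∀ i, x i ≠ y → x i ∈ A := fun i hi => by
    simpa [hi] using hx i
  by_cases hall : ∀ i, x i = y
  · intro i
    rwa [filter_true_of_mem fun j _ => by rw [hall i, hall j]]
  obtain ⟨i₀, hi₀⟩ := not_forall.mp hall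
  set S := univ.filter fun i => x i = y
  set v := ∑ i ∈ S, u i
  set u' : Fin 4 → ℤ := fun i => if x i = y then 0 else u i
  set x' : Fin 4 → ℤ := fun i => if x i = y then x i₀ else x i
  have hu' : ∀ i, |u' i| ≤ k := fun i => by
    by_cases h : x i = y <;> simp [u', h, hu i]
  have hx' : ∀ i, x' i ∈ A := fun i => by
    by_cases h : x i = y <;> simp [x', h, hxA, hi₀]
  have hsum' : ∑ i, u' i = -v := by
    rw [← sum_filter_add_sum_filter_not univ (fun i => x i = y)] at hsum
    simp only [u', sum_ite, sum_const_zero, zero_add]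
    linarith
  have hlin' : ∑ i, u' i * x' i = -v * y := by
    rw [← sum_filter_add_sum_filter_not univ (fun i => x i = y)] at hlin
    have hSy : ∑ i ∈ S, u i * x i = v * y := by
      rw [sum_mul]
      exact sum_congr rfl fun i hi => by rw [(mem_filter.mp hi).2]
    simp only [u', x', ite_mul, zero_mul, sum_ite, sum_const_zero, zero_add]
    rw [sum_congr rfl fun i hi => by rw [if_neg (mem_filter.mp hi).2]]
    linarith
  by_cases hv : v = 0
  · refine IsTrivialSol.of_replace hv (hA u' x' hu' ?_ hx' ?_)
    · rw [hsum', hv, neg_zero]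
    · rw [hlin', hv, neg_zero, zero_mul]
  · exfalso
    obtain ⟨j₀, hj₀⟩ : S.Nonempty := nonempty_of_sum_ne_zero hv
    have hv_le : |v| ≤ 4 * k := calc
      |v| ≤ ∑ i ∈ S, |u i| := abs_sum_le_sum_abs _ _
      _ ≤ ∑ _i ∈ S, (k : ℤ) := sum_le_sum fun i _ => hu i
      _ ≤ 4 * k := by
        rw [sum_const, nsmul_eq_mul]
        exact mul_le_mul_of_nonneg_right (by exact_mod_cast card_le_univ S) (by positivity)
    -- `u'` vanishes at the slot `j₀` of `y`, so the linear form only involves the other three.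
    have hdrop : ∑ t, u' (j₀.succAbove t) * x' (j₀.succAbove t) = -v * y := by
      have hu'j₀ : u' j₀ = 0 := if_pos (mem_filter.mp hj₀).2
      rw [← hlin', Fin.sum_univ_succAbove _ j₀, hu'j₀, zero_mul, zero_add]
    apply hy
    refine mem_image.mpr ⟨(-v, fun t => u' (j₀.succAbove t), fun t => x' (j₀.succAbove t)),
      ?_, ?_⟩
    · simp only [mem_product, mem_Icc, Fintype.mem_piFinset]
      exact ⟨by constructor <;> linarith [abs_le.mp hv_le], fun t => abs_le.mp (hu' _),
        fun t => hx' _⟩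
    · simp only [hdrop]
      exact Int.mul_ediv_cancel_left y (neg_ne_zero.mpr hv)

lemma isKFoldSidon_empty (k : ℤ) : IsKFoldSidon k ↑(∅ : Finset ℤ) :=
  fun _ x _ _ hx _ => absurd (hx 0) (by simp)

lemma exists_isKFoldSidon_Icc (k N : ℕ) :
    ∃ A : Finset ℤ, ↑A ⊆ Set.Icc (1 : ℤ) N ∧ IsKFoldSidon k ↑A ∧
      N ≤ #A + (8 * k + 1) * (2 * k + 1) ^ 3 * #A ^ 3 := by
  classical
  obtain ⟨A, hA, hmax⟩ := exists_max_image
    ((Icc (1 : ℤ) N).powerset.filter fun A : Finset ℤ => IsKFoldSidon k ↑A) card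
    ⟨∅, mem_filter.mpr ⟨empty_mem_powerset _, isKFoldSidon_empty k⟩⟩
  obtain ⟨hAI, hAS⟩ := mem_filter.mp hA
  refine ⟨A, by rw [← coe_Icc]; exact coe_subset.mpr (mem_powerset.mp hAI), hAS, ?_⟩
  have hcover : Icc (1 : ℤ) N ⊆ A ∪ sidonObstructions k A := fun y hy => by
    by_contra hyA
    obtain ⟨hyA, hyO⟩ := not_or.mp (mem_union.not.mp hyA)
    have := hmax (insert y A) (mem_filter.mpr
      ⟨mem_powerset.mpr (insert_subset hy (mem_powerset.mp hAI)), hAS.insert hyO⟩)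
    rw [card_insert_of_notMem hyA] at this
    omega
  calc N = #(Icc (1 : ℤ) N) := by simp
    _ ≤ #(A ∪ sidonObstructions k A) := card_le_card hcover
    _ ≤ #A + #(sidonObstructions k A) := card_union_le _ _
    _ ≤ _ := Nat.add_le_add_left (card_sidonObstructions_le k A) _

lemma rpow_neg_third_mul_rpow_le {C k N m : ℝ} (hC : 0 < C) (hk : 0 < k) (hN : 0 ≤ N)
    (hm : 0 ≤ m) (h : N ≤ C * k ^ 4 * m ^ 3) :
    C ^ (-(1 : ℝ) / 3) * k ^ (-(4 : ℝ) / 3) * N ^ ((1 : ℝ) / 3) ≤ m := by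
  have cube : ∀ {x : ℝ} (r : ℝ), 0 ≤ x → (x ^ (r / 3)) ^ 3 = x ^ r := fun r hx => by
    rw [← Real.rpow_natCast, ← Real.rpow_mul hx]
    norm_num
  refine (pow_le_pow_iff_left₀ (by positivity) hm three_ne_zero).mp ?_
  rw [mul_pow, mul_pow, cube _ hC.le, cube _ hk.le, cube _ hN, Real.rpow_one,
    Real.rpow_neg hC.le, Real.rpow_neg hk.le, Real.rpow_one,
    show (4 : ℝ) = (4 : ℕ) by norm_num, Real.rpow_natCast, ← mul_inv,
    inv_mul_le_iff₀ (by positivity)]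
  exact h

/-- For integers `N > k⁴ ≥ 1` there is a `k`-fold Sidon set `A ⊆ {1, …, N}` with
`|A| ≥ c k^{-4/3} N^{1/3}` for an absolute constant `c > 0`. -/
theorem stmt5 :
    ∃ c : ℝ, 0 < c ∧ ∀ k N : ℕ, 1 ≤ k ^ 4 → k ^ 4 < N →
      ∃ A : Finset ℤ, ↑A ⊆ Set.Icc (1 : ℤ) (N : ℤ) ∧ IsKFoldSidon (k : ℤ) ↑A ∧
        c * (k : ℝ) ^ (-(4 : ℝ) / 3) * (N : ℝ) ^ ((1 : ℝ) / 3) ≤ (A.card : ℝ) := by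
  refine ⟨(244 : ℝ) ^ (-(1 : ℝ) / 3), by positivity, fun k N hk _ => ?_⟩
  have hk : 1 ≤ k := Nat.one_le_iff_ne_zero.mpr (by rintro rfl; simp at hk)
  obtain ⟨A, hAI, hAS, hN⟩ := exists_isKFoldSidon_Icc k N
  refine ⟨A, hAI, hAS, rpow_neg_third_mul_rpow_le (by norm_num) (by positivity)
    (Nat.cast_nonneg _) (Nat.cast_nonneg _) ?_⟩
  have hcoef : (8 * k + 1) * (2 * k + 1) ^ 3 ≤ 243 * k ^ 4 := calc
    (8 * k + 1) * (2 * k + 1) ^ 3 ≤ (9 * k) * (3 * k) ^ 3 := by gcongr <;> omega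
    _ = 243 * k ^ 4 := by ring
  have hA : #A ≤ k ^ 4 * #A ^ 3 :=
    (Nat.le_self_pow three_ne_zero _).trans (Nat.le_mul_of_pos_left _ (by positivity))
  have : N ≤ 244 * k ^ 4 * #A ^ 3 := by nlinarith
  exact_mod_cast this
end

section
/- For every n > 1 there exist a set P of Θ(n) points and a set L of Θ(n) lines in the plane such that the incidence graph of (P, L) contains no cycle of length 8 of the form ℓ₁p₁ℓ₂p₂ℓ₃p₃ℓ₄p₄ with all four intersection points distinct (i.e., (P, L) contains no configuration of 4 lines and 4 points forming a 'grid' K_{2,2}-pattern with 4 distinct intersection points), and the number of incidences |I(P, L)| is at least Ω(n^{1 + 1/14}). -/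
/-!
Take `P = A × [0, Y)` and the lines `y = m x + b` with slopes `m` in the Erdős–Turán Sidon set
`{2 p i + (i² mod p) : i < p}` and integer intercepts in `[-Y, Y)`. In a grid cycle with lines
`(mᵢ, bᵢ)` and points `(aᵢ, yᵢ) ∈ ℓᵢ ∩ ℓᵢ₊₁`, subtracting the two incidences at each point and
summing around the cycle gives `∑ (mᵢ - mᵢ₊₁) aᵢ = 0`, a relation with nonzero coefficients
below `2 p²` that sum to zero. The `p` x-coordinates `A ⊆ [0, O(p¹¹))` are chosen greedily so
that no 3 or 4 distinct elements satisfy such a relation with coefficients up to `4 p²`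
(a `k`-fold Sidon set); this forces `a₀ = a₂`, `a₁ = a₃` and `m₀ + m₂ = m₁ + m₃`, which the
Sidon property forbids. With `Y = Θ(p¹³)` both `P` and `L` have `Θ(p¹⁴)` elements, and each
(point, slope) pair is an incidence, `p¹⁵` in all; take `p ≈ n^{1/14}`.
-/

open Finset

def IsSidon {α : Type*} [Add α] (s : Set α) : Prop :=
  ∀ ⦃a⦄, a ∈ s → ∀ ⦃b⦄, b ∈ s → ∀ ⦃c⦄, c ∈ s → ∀ ⦃d⦄, d ∈ s →
    a + b = c + d → a = c ∧ b = d ∨ a = d ∧ b = c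

def NoBoundedRelation (r k : ℕ) (A : Finset ℕ) : Prop :=
  ∀ (c : Fin r → ℤ) (a : Fin r → ℕ), Function.Injective a → (∀ i, a i ∈ A) →
    (∀ i, c i ≠ 0) → (∀ i, |c i| ≤ k) → ∑ i, c i = 0 → ∑ i, c i * a i ≠ 0

lemma noBoundedRelation_empty (r k : ℕ) : NoBoundedRelation (r + 1) k ∅ :=
  fun _ _ _ ha => absurd (ha 0) (notMem_empty _)

-- contains every `x` with `c₀ * x + ∑ cᵢ₊₁ * aᵢ = 0` for some `cᵢ ∈ [-k, k]`, `c₀ ≠ 0`, `aᵢ ∈ A`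
noncomputable def relationBlockers (r k : ℕ) (A : Finset ℕ) : Finset ℕ :=
  (Fintype.piFinset (fun _ : Fin (r + 1) => Icc (-(k : ℤ)) k) ×ˢ
      Fintype.piFinset (fun _ : Fin r => A)).image
    fun q => (-(∑ i, q.1 i.succ * q.2 i) / q.1 0).toNat

lemma card_relationBlockers_le (r k : ℕ) (A : Finset ℕ) :
    #(relationBlockers r k A) ≤ (2 * k + 1) ^ (r + 1) * #A ^ r := by
  refine card_image_le.trans (le_of_eq ?_)
  simp only [card_product, Fintype.card_piFinset, prod_const, card_univ, Fintype.card_fin,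
    Int.card_Icc]
  congr 2
  omega

lemma NoBoundedRelation.insert {r k x : ℕ} {A : Finset ℕ} (hA : NoBoundedRelation (r + 1) k A)
    (hx : x ∉ relationBlockers r k A) : NoBoundedRelation (r + 1) k (insert x A) := by
  intro c a ha hmem hc hck hsum hrel
  by_cases hxa : ∃ j, a j = x
  · obtain ⟨j, rfl⟩ := hxa
    set σ := Equiv.swap 0 j
    have hσ0 : σ 0 = j := Equiv.swap_apply_left 0 j
    have hσ : ∀ i : Fin r, a (σ i.succ) ≠ a j := fun i h =>
      Fin.succ_ne_zero i (σ.injective (ha (h.trans (by rw [hσ0]))))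
    refine hx (mem_image.mpr ⟨(c ∘ σ, fun i => a (σ i.succ)), ?_, ?_⟩)
    · simp only [mem_product, Fintype.mem_piFinset, mem_Icc, Function.comp_apply, ← abs_le]
      exact ⟨fun i => hck _, fun i => (mem_insert.mp (hmem _)).resolve_left (hσ i)⟩
    · have hperm : ∑ i, c (σ i) * a (σ i) = 0 := by
        rw [Equiv.sum_comp σ (fun i => c i * a i), hrel]
      rw [Fin.sum_univ_succ, hσ0] at hperm
      simp only [Function.comp_apply, hσ0]
      rw [show -∑ i : Fin r, c (σ i.succ) * a (σ i.succ) = c j * a j by linarith,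
        Int.mul_ediv_cancel_left _ (hc j), Int.toNat_natCast]
  · push Not at hxa
    exact hA c a ha (fun i => (mem_insert.mp (hmem i)).resolve_left (hxa i)) hc hck hsum hrel

theorem Finset.exists_subset_card_eq_of_insert {α : Type*} [DecidableEq α]
    {P : Finset α → Prop} (S : Finset α) (bad : Finset α → Finset α) (hempty : P ∅)
    (hinsert : ∀ A x, P A → x ∉ bad A → P (insert x A)) (t : ℕ)
    (hroom : ∀ A ⊆ S, P A → #A < t → #A + #(bad A) < #S) :
    ∃ A ⊆ S, #A = t ∧ P A := by
  induction t with
  | zero => exact ⟨∅, empty_subset _, card_empty, hempty⟩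
  | succ t ih =>
    obtain ⟨A, hAS, hA, hPA⟩ := ih fun A hAS hPA hlt => hroom A hAS hPA (by omega)
    obtain ⟨x, hx⟩ : (S \ (A ∪ bad A)).Nonempty := by
      have := le_card_sdiff (A ∪ bad A) S
      have := card_union_le A (bad A)
      have := hroom A hAS hPA (by omega)
      rw [← card_pos]
      omega
    simp only [mem_sdiff, mem_union, not_or] at hx
    exact ⟨insert x A, insert_subset hx.1 hAS, by rw [card_insert_of_notMem hx.2.1, hA],
      hinsert A x hPA hx.2.2⟩

theorem exists_noBoundedRelation (k t : ℕ) :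
    ∃ A ⊆ range (3 * (2 * k + 1) ^ 4 * t ^ 3), #A = t ∧
      NoBoundedRelation 3 k A ∧ NoBoundedRelation 4 k A := by
  refine exists_subset_card_eq_of_insert _
    (fun A => relationBlockers 2 k A ∪ relationBlockers 3 k A)
    ⟨noBoundedRelation_empty 2 k, noBoundedRelation_empty 3 k⟩
    (fun A x hA hx => ?_) t fun A _ _ hAt => ?_
  · rw [mem_union, not_or] at hx
    exact ⟨hA.1.insert hx.1, hA.2.insert hx.2⟩
  · set q := 2 * k + 1
    set s := #A
    have hq : 1 ≤ q := by omega
    have h1 : s < q ^ 4 * t ^ 3 := calc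
      s < t := hAt
      _ ≤ t ^ 3 := Nat.le_self_pow (by norm_num) t
      _ ≤ q ^ 4 * t ^ 3 := Nat.le_mul_of_pos_left _ (by positivity)
    have h2 : q ^ 3 * s ^ 2 ≤ q ^ 4 * t ^ 3 := Nat.mul_le_mul
      (Nat.pow_le_pow_right hq (by norm_num))
      ((Nat.pow_le_pow_left hAt.le 2).trans (Nat.pow_le_pow_right (by omega) (by norm_num)))
    have h3 : q ^ 4 * s ^ 3 ≤ q ^ 4 * t ^ 3 := by gcongr
    have := card_union_le (relationBlockers 2 k A) (relationBlockers 3 k A)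
    have : #(relationBlockers 2 k A) ≤ q ^ 3 * s ^ 2 := card_relationBlockers_le 2 k A
    have : #(relationBlockers 3 k A) ≤ q ^ 4 * s ^ 3 := card_relationBlockers_le 3 k A
    rw [card_range, mul_assoc]
    omega

lemma Fin.sum_sub_add_one_eq_zero {n : ℕ} [NeZero n] {G : Type*} [AddCommGroup G]
    (f : Fin n → G) : ∑ i, (f i - f (i + 1)) = 0 := by
  rw [sum_sub_distrib]
  exact sub_eq_zero.mpr (Equiv.sum_comp (Equiv.addRight (1 : Fin n)) f).symm

lemma add_eq_zero_of_cyclic_relation {k : ℕ} {A : Finset ℕ}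
    (h3 : NoBoundedRelation 3 (2 * k) A) (h4 : NoBoundedRelation 4 (2 * k) A)
    {c : Fin 4 → ℤ} {a : Fin 4 → ℕ} (hc : ∀ i, c i ≠ 0) (hck : ∀ i, |c i| ≤ k)
    (hsum : ∑ i, c i = 0) (ha : ∀ i, a i ∈ A) (hadj : ∀ i, a i ≠ a (i + 1))
    (hrel : ∑ i, c i * a i = 0) : c 0 + c 2 = 0 := by
  rw [Fin.sum_univ_four] at hsum hrel
  have h01 : a 0 ≠ a 1 := hadj 0
  have h12 : a 1 ≠ a 2 := hadj 1
  have h23 : a 2 ≠ a 3 := hadj 2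
  have h30 : a 3 ≠ a 0 := hadj 3
  have hk : ∀ i, |c i| ≤ 2 * k := fun i => by linarith [hck i, abs_nonneg (c i)]
  have hk02 : |c 0 + c 2| ≤ 2 * k := (abs_add_le _ _).trans (by linarith [hck 0, hck 2])
  have hk13 : |c 1 + c 3| ≤ 2 * k := (abs_add_le _ _).trans (by linarith [hck 1, hck 3])
  by_cases h02 : a 0 = a 2 <;> by_cases h13 : a 1 = a 3
  · have h : (c 0 + c 2) * ((a 0 : ℤ) - a 1) = 0 := by
      rw [← h02, ← h13] at hrel; linear_combination hrel - (a 1 : ℤ) * hsum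
    exact (mul_eq_zero.mp h).resolve_right (sub_ne_zero.mpr (by exact_mod_cast h01))
  · by_contra hne
    refine h3 ![c 0 + c 2, c 1, c 3] ![a 0, a 1, a 3] ?_ ?_ ?_ ?_ ?_ ?_
    · intro i j hij; fin_cases i <;> fin_cases j <;> simp_all [eq_comm]
    · simp [Fin.forall_fin_succ, ha]
    · simp [Fin.forall_fin_succ, hc, hne]
    · simp [Fin.forall_fin_succ, hk, hk02]
    · simp only [Fin.isValue, Fin.sum_univ_three, Matrix.cons_val_zero, Matrix.cons_val_one,
        Matrix.cons_val]
      linear_combination hsum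
    · simp only [Fin.isValue, Fin.sum_univ_three, Matrix.cons_val_zero, Matrix.cons_val_one,
        Matrix.cons_val]
      rw [← h02] at hrel; linear_combination hrel
  · by_contra hne
    have hne' : c 1 + c 3 ≠ 0 := fun h => hne (by linear_combination hsum - h)
    refine h3 ![c 0, c 1 + c 3, c 2] ![a 0, a 1, a 2] ?_ ?_ ?_ ?_ ?_ ?_
    · intro i j hij; fin_cases i <;> fin_cases j <;> simp_all [eq_comm]
    · simp [Fin.forall_fin_succ, ha]
    · simp [Fin.forall_fin_succ, hc, hne']
    · simp [Fin.forall_fin_succ, hk, hk13]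
    · simp only [Fin.isValue, Fin.sum_univ_three, Matrix.cons_val_zero, Matrix.cons_val_one,
        Matrix.cons_val]
      linear_combination hsum
    · simp only [Fin.isValue, Fin.sum_univ_three, Matrix.cons_val_zero, Matrix.cons_val_one,
        Matrix.cons_val]
      rw [← h13] at hrel; linear_combination hrel
  · exfalso
    refine h4 c a ?_ ha hc (by exact_mod_cast hk) (by rw [Fin.sum_univ_four]; exact hsum)
      (by rw [Fin.sum_univ_four]; exact hrel)
    intro i j hij; fin_cases i <;> fin_cases j <;> simp_all [eq_comm]

def erdosTuran (p i : ℕ) : ℕ := 2 * p * i + i ^ 2 % p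

lemma erdosTuran_lt {p i : ℕ} (hi : i < p) : erdosTuran p i < 2 * p ^ 2 := by
  have := Nat.mod_lt (i ^ 2) (by omega : 0 < p)
  unfold erdosTuran; nlinarith

lemma erdosTuran_add_eq_add {p i j k l : ℕ} (hp : p.Prime) (hp2 : p ≠ 2)
    (hi : i < p) (hk : k < p) (hl : l < p)
    (h : erdosTuran p i + erdosTuran p j = erdosTuran p k + erdosTuran p l) :
    i = k ∧ j = l ∨ i = l ∧ j = k := by
  have := Fact.mk hp
  have hp0 : 0 < 2 * p := by omega
  -- the residues `i ^ 2 % p` sum to less than `2 * p`, so both parts of the sum are recovered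
  have hdiv : ∀ u v w : ℕ, u < p → v < p → (u + v + 2 * p * w) / (2 * p) = w ∧
      (u + v + 2 * p * w) % (2 * p) = u + v := fun u v w hu hv =>
    (Nat.div_mod_unique hp0).mpr ⟨rfl, by omega⟩
  have hmod := fun n => Nat.mod_lt (n ^ 2) hp.pos
  have e : i ^ 2 % p + j ^ 2 % p + 2 * p * (i + j) =
      k ^ 2 % p + l ^ 2 % p + 2 * p * (k + l) := by
    unfold erdosTuran at h; linarith
  have hlin : i + j = k + l := by
    rw [← (hdiv _ _ (i + j) (hmod i) (hmod j)).1, e, (hdiv _ _ _ (hmod k) (hmod l)).1]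
  have hsq : i ^ 2 % p + j ^ 2 % p = k ^ 2 % p + l ^ 2 % p := by
    rw [← (hdiv _ _ (i + j) (hmod i) (hmod j)).2, e, (hdiv _ _ _ (hmod k) (hmod l)).2]
  have hlin' : (i + j : ZMod p) = k + l := by
    exact_mod_cast congrArg (Nat.cast : ℕ → ZMod p) hlin
  have hsq' : (i ^ 2 + j ^ 2 : ZMod p) = k ^ 2 + l ^ 2 := by
    simpa [ZMod.natCast_mod] using congrArg (Nat.cast : ℕ → ZMod p) hsq
  have h2 : (2 : ZMod p) ≠ 0 := by
    intro h2
    have := (ZMod.natCast_eq_zero_iff 2 p).mp (by exact_mod_cast h2)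
    have := Nat.le_of_dvd (by norm_num) this
    have := hp.two_le
    omega
  have key : 2 * ((i : ZMod p) - k) * ((i : ZMod p) - l) = 0 := by
    linear_combination hsq' - ((j : ZMod p) + k + l - i) * hlin'
  have hcast : ∀ u v : ℕ, u < p → v < p → (u : ZMod p) = v → u = v := fun u v hu hv huv => by
    rwa [ZMod.natCast_eq_natCast_iff', Nat.mod_eq_of_lt hu, Nat.mod_eq_of_lt hv] at huv
  rcases mul_eq_zero.mp key with h | h
  · have hik := hcast i k hi hk (sub_eq_zero.mp ((mul_eq_zero.mp h).resolve_left h2))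
    exact Or.inl ⟨hik, by omega⟩
  · have hil := hcast i l hi hl (sub_eq_zero.mp h)
    exact Or.inr ⟨hil, by omega⟩

lemma isSidon_erdosTuran {p : ℕ} (hp : p.Prime) (hp2 : p ≠ 2) :
    IsSidon (((range p).image (erdosTuran p) : Finset ℕ) : Set ℕ) := by
  simp only [IsSidon, coe_image, coe_range, Set.forall_mem_image, Set.mem_Iio]
  intro i hi j _ k hk l hl h
  rcases erdosTuran_add_eq_add hp hp2 hi hk hl h with ⟨rfl, rfl⟩ | ⟨rfl, rfl⟩ <;> simp

lemma card_image_erdosTuran {p : ℕ} (hp : p.Prime) (hp2 : p ≠ 2) :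
    #((range p).image (erdosTuran p)) = p := by
  rw [card_image_of_injOn, card_range]
  intro i hi j hj h
  simp only [coe_range, Set.mem_Iio] at hi hj
  exact (erdosTuran_add_eq_add hp hp2 hi hj hj (by rw [h])).elim (·.1) (·.1)

lemma cyclic_relation_ne_zero {K : ℕ} {A M : Finset ℕ} (hM : IsSidon (M : Set ℕ))
    (hMK : M ⊆ range K) (h3 : NoBoundedRelation 3 (2 * K) A)
    (h4 : NoBoundedRelation 4 (2 * K) A) {m a : Fin 4 → ℕ} (hm : ∀ i, m i ∈ M)
    (ha : ∀ i, a i ∈ A) (hm_adj : ∀ i, m i ≠ m (i + 1)) (ha_adj : ∀ i, a i ≠ a (i + 1)) :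
    ∑ i, ((m i : ℤ) - m (i + 1)) * a i ≠ 0 := by
  intro hrel
  have hmK : ∀ i, m i < K := fun i => mem_range.mp (hMK (hm i))
  have h := add_eq_zero_of_cyclic_relation h3 h4
    (fun i => sub_ne_zero.mpr (by exact_mod_cast hm_adj i))
    (fun i => abs_le.mpr ⟨by linarith [hmK i, hmK (i + 1)], by linarith [hmK i, hmK (i + 1)]⟩)
    (Fin.sum_sub_add_one_eq_zero _) ha ha_adj hrel
  have hsum : m 0 + m 2 = m 1 + m 3 := by
    simp only [Fin.isValue, zero_add, Fin.reduceAdd] at h; omega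
  rcases hM (hm 0) (hm 2) (hm 1) (hm 3) hsum with ⟨h01, -⟩ | ⟨h03, -⟩
  · exact hm_adj 0 h01
  · exact hm_adj 3 h03.symm

def OnLine (q l : ℝ × ℝ) : Prop := q.2 = l.1 * q.1 + l.2

def HasGridCycle (P L : Finset (ℝ × ℝ)) : Prop :=
  ∃ (l : Fin 4 → ℝ × ℝ) (p : Fin 4 → ℝ × ℝ), Function.Injective l ∧ Function.Injective p ∧
    (∀ i, l i ∈ L) ∧ (∀ i, p i ∈ P) ∧ ∀ i, OnLine (p i) (l i) ∧ OnLine (p i) (l (i + 1))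

open scoped Classical in
noncomputable def incidences (P L : Finset (ℝ × ℝ)) : ℕ :=
  #((P ×ˢ L).filter fun q => q.1.2 = q.2.1 * q.1.1 + q.2.2)

lemma slope_ne_of_onLine {l l' q : ℝ × ℝ} (hne : l ≠ l') (h : OnLine q l) (h' : OnLine q l') :
    l.1 ≠ l'.1 := fun h1 =>
  hne (Prod.ext h1 (by unfold OnLine at h h'; rw [h1] at h; linarith))

lemma fst_ne_of_onLine {q q' l : ℝ × ℝ} (hne : q ≠ q') (h : OnLine q l)
    (h' : OnLine q' l) : q.1 ≠ q'.1 := fun h1 =>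
  hne (Prod.ext h1 (by unfold OnLine at h h'; rw [h, h', h1]))

lemma sum_slope_sub_mul_eq_zero {n : ℕ} [NeZero n] {l q : Fin n → ℝ × ℝ}
    (h : ∀ i, OnLine (q i) (l i) ∧ OnLine (q i) (l (i + 1))) :
    ∑ i, ((l i).1 - (l (i + 1)).1) * (q i).1 = 0 := by
  rw [← Fin.sum_sub_add_one_eq_zero fun i => -(l i).2]
  refine sum_congr rfl fun i _ => ?_
  have := h i
  unfold OnLine at this
  linarith [this.1, this.2]

noncomputable def pointGrid (A : Finset ℕ) (Y : ℕ) : Finset (ℝ × ℝ) :=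
  (A ×ˢ range Y).image (Prod.map (↑) (↑))

noncomputable def linePencil (M : Finset ℕ) (B : Finset ℤ) : Finset (ℝ × ℝ) :=
  (M ×ˢ B).image (Prod.map (↑) (↑))

lemma card_pointGrid (A : Finset ℕ) (Y : ℕ) : #(pointGrid A Y) = #A * Y := by
  rw [pointGrid, card_image_of_injective _ (Nat.cast_injective.prodMap Nat.cast_injective),
    card_product, card_range]

lemma card_linePencil (M : Finset ℕ) (B : Finset ℤ) : #(linePencil M B) = #M * #B := by
  rw [linePencil, card_image_of_injective _ (Nat.cast_injective.prodMap Int.cast_injective),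
    card_product]

theorem not_hasGridCycle {K : ℕ} {A M : Finset ℕ} (hM : IsSidon (M : Set ℕ))
    (hMK : M ⊆ range K) (h3 : NoBoundedRelation 3 (2 * K) A)
    (h4 : NoBoundedRelation 4 (2 * K) A) (Y : ℕ) (B : Finset ℤ) :
    ¬HasGridCycle (pointGrid A Y) (linePencil M B) := by
  rintro ⟨l, q, hl, hq, hlL, hqP, hinc⟩
  have hslope : ∀ i, ∃ m ∈ M, (l i).1 = m := fun i => by
    obtain ⟨⟨m, b⟩, hmb, h⟩ := mem_image.mp (hlL i)
    exact ⟨m, (mem_product.mp hmb).1, by rw [← h]; rfl⟩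
  have hx : ∀ i, ∃ a ∈ A, (q i).1 = a := fun i => by
    obtain ⟨⟨a, y⟩, hay, h⟩ := mem_image.mp (hqP i)
    exact ⟨a, (mem_product.mp hay).1, by rw [← h]; rfl⟩
  choose m hmM hm using hslope
  choose a haA ha using hx
  have hadj : ∀ i : Fin 4, i ≠ i + 1 := by decide
  refine cyclic_relation_ne_zero hM hMK h3 h4 hmM haA (fun i h => ?_) (fun i h => ?_) ?_
  · exact slope_ne_of_onLine (hl.ne (hadj i)) (hinc i).1 (hinc i).2 (by rw [hm, hm, h])
  · exact fst_ne_of_onLine (hq.ne (hadj i)) (hinc i).2 (hinc (i + 1)).1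
      (by rw [ha, ha, h])
  · have := sum_slope_sub_mul_eq_zero hinc
    simp only [hm, ha] at this
    exact_mod_cast this

lemma card_mul_le_incidences {K N : ℕ} {A M : Finset ℕ} (hA : A ⊆ range N) (hM : M ⊆ range K)
    (Y : ℕ) :
    #A * Y * #M ≤ incidences (pointGrid A Y) (linePencil M (Ico (-(K * N : ℤ)) Y)) := by
  unfold incidences
  rw [show #A * Y * #M = #((A ×ˢ range Y) ×ˢ M) by rw [card_product, card_product, card_range]]
  refine card_le_card_of_injOn
    (fun q => (((q.1.1 : ℝ), (q.1.2 : ℝ)), ((q.2 : ℝ), (((q.1.2 : ℤ) - q.2 * q.1.1 : ℤ) : ℝ))))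
    (fun q hq => ?_) (fun q _ q' _ h => ?_)
  · obtain ⟨hay, hm⟩ := mem_product.mp hq
    have ha := mem_product.mp hay
    rw [mem_coe]
    have hma : q.2 * q.1.1 < K * N :=
      Nat.mul_lt_mul'' (mem_range.mp (hM hm)) (mem_range.mp (hA ha.1))
    simp only [mem_filter, mem_product, pointGrid, linePencil, mem_image]
    refine ⟨⟨⟨q.1, ha, rfl⟩, ⟨(q.2, _), ⟨hm, ?_⟩, rfl⟩⟩, by push_cast; ring⟩
    rw [mem_Ico]
    constructor <;> push_cast <;> nlinarith [mem_range.mp ha.2]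
  · simp only [Prod.mk.injEq, Nat.cast_inj] at h
    exact Prod.ext (Prod.ext h.1.1 h.1.2) h.2.1

theorem exists_gridFree_of_prime {p : ℕ} (hp : p.Prime) (hp2 : p ≠ 2) :
    ∃ P L : Finset (ℝ × ℝ), p ^ 14 ≤ #P ∧ #P ≤ 2 ^ 18 * p ^ 14 ∧
      p ^ 14 ≤ #L ∧ #L ≤ 2 ^ 18 * p ^ 14 ∧ ¬HasGridCycle P L ∧ p ^ 15 ≤ incidences P L := by
  set K := 2 * p ^ 2
  set M := (range p).image (erdosTuran p)
  have hMK : M ⊆ range K :=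
    image_subset_iff.mpr fun i hi => mem_range.mpr (erdosTuran_lt (mem_range.mp hi))
  obtain ⟨A, hAN, hA, h3, h4⟩ := exists_noBoundedRelation (2 * K) p
  set N := 3 * (2 * (2 * K) + 1) ^ 4 * p ^ 3
  have hN : p ^ 14 ≤ p ^ 3 * N ∧ p ^ 3 * N ≤ 3 * 9 ^ 4 * p ^ 14 := by
    have hq : p ^ 2 ≤ 2 * (2 * K) + 1 ∧ 2 * (2 * K) + 1 ≤ 9 * p ^ 2 := by
      have := Nat.one_le_pow 2 p hp.pos; omega
    constructor
    · calc p ^ 14 = p ^ 3 * ((p ^ 2) ^ 4 * p ^ 3) := by ring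
        _ ≤ p ^ 3 * ((2 * (2 * K) + 1) ^ 4 * p ^ 3) := by gcongr; exact hq.1
        _ ≤ p ^ 3 * (3 * ((2 * (2 * K) + 1) ^ 4 * p ^ 3)) :=
          Nat.mul_le_mul_left _ (Nat.le_mul_of_pos_left _ (by norm_num))
        _ = p ^ 3 * N := by ring
    · calc p ^ 3 * N = p ^ 3 * (3 * (2 * (2 * K) + 1) ^ 4 * p ^ 3) := rfl
        _ ≤ p ^ 3 * (3 * (9 * p ^ 2) ^ 4 * p ^ 3) := by gcongr; exact hq.2
        _ = 3 * 9 ^ 4 * p ^ 14 := by ring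
  have hP : #(pointGrid A (K * N)) = 2 * (p ^ 3 * N) := by rw [card_pointGrid, hA]; ring
  have hL : #(linePencil M (Ico (-(K * N : ℤ)) (K * N : ℕ))) = 4 * (p ^ 3 * N) := by
    rw [card_linePencil, card_image_erdosTuran hp hp2, Int.card_Ico]; push_cast
    rw [show ((K : ℤ) * N - -(K * N)).toNat = 2 * (K * N) by omega]; ring
  have hI := card_mul_le_incidences hAN hMK (K * N)
  rw [hA, card_image_erdosTuran hp hp2,
    show p * (K * N) * p = p * (2 * (p ^ 3 * N)) by ring] at hI
  refine ⟨pointGrid A (K * N), linePencil M (Ico (-(K * N : ℤ)) (K * N : ℕ)),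
    by rw [hP]; omega, by rw [hP]; omega, by rw [hL]; omega, by rw [hL]; omega,
    not_hasGridCycle (isSidon_erdosTuran hp hp2) hMK h3 h4 _ _, le_trans ?_ hI⟩
  calc p ^ 15 = p * p ^ 14 := by ring
    _ ≤ p * (2 * (p ^ 3 * N)) := by gcongr; omega

lemma exists_prime_btwn_of_one_lt {x : ℝ} (hx : 1 < x) :
    ∃ p : ℕ, p.Prime ∧ p ≠ 2 ∧ x < p ∧ (p : ℝ) < 4 * x := by
  have ht : 2 ≤ ⌈x⌉₊ := Nat.lt_ceil.mpr (by exact_mod_cast hx)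
  obtain ⟨p, hp, htp, hpt⟩ := Nat.exists_prime_lt_and_le_two_mul ⌈x⌉₊ (by omega)
  refine ⟨p, hp, by omega, (Nat.le_ceil x).trans_lt (by exact_mod_cast htp), ?_⟩
  have := Nat.ceil_lt_add_one (by linarith : 0 ≤ x)
  calc (p : ℝ) ≤ 2 * ⌈x⌉₊ := by exact_mod_cast hpt
    _ < 4 * x := by linarith

lemma exists_prime_pow_fourteen_near {n : ℕ} (hn : 1 < n) :
    ∃ p : ℕ, p.Prime ∧ p ≠ 2 ∧ (n : ℝ) ≤ p ^ 14 ∧ (p : ℝ) ^ 14 ≤ 4 ^ 14 * n ∧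
      (n : ℝ) ^ ((1 : ℝ) + 1 / 14) ≤ p ^ 15 := by
  have hn1 : (1 : ℝ) < n := by exact_mod_cast hn
  set x := (n : ℝ) ^ ((1 : ℝ) / 14)
  have hx0 : 0 ≤ x := by positivity
  have hx : ∀ k : ℕ, x ^ k = (n : ℝ) ^ ((k : ℝ) / 14) := fun k => by
    rw [← Real.rpow_natCast, ← Real.rpow_mul (by positivity)]; ring_nf
  have hx14 : x ^ 14 = n := by rw [hx]; norm_num
  obtain ⟨p, hp, hp2, hxp, hpx⟩ :=
    exists_prime_btwn_of_one_lt (x := x) (Real.one_lt_rpow hn1 (by norm_num))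
  refine ⟨p, hp, hp2, hx14 ▸ pow_le_pow_left₀ hx0 hxp.le 14, ?_, ?_⟩
  · rw [← hx14, ← mul_pow]
    exact pow_le_pow_left₀ (by positivity) hpx.le 14
  · rw [show (1 : ℝ) + 1 / 14 = (15 : ℕ) / 14 by norm_num, ← hx]
    exact pow_le_pow_left₀ hx0 hxp.le 15

open scoped Classical in
/-- For every `n > 1` there are `Θ(n)` points and `Θ(n)` lines (given as
slope–intercept pairs) whose incidence graph contains no 4-lines/4-points grid cycle
(four distinct lines `ℓ₁,ℓ₂,ℓ₃,ℓ₄` and four distinct points `pᵢ ∈ ℓᵢ ∩ ℓᵢ₊₁`),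
yet with at least `Ω(n^{1 + 1/14})` incidences. -/
theorem stmt10 :
    ∃ c₁ c₂ c₃ : ℝ, 0 < c₁ ∧ 0 < c₂ ∧ 0 < c₃ ∧
      ∀ n : ℕ, 1 < n → ∃ P L : Finset (ℝ × ℝ),
        c₁ * n ≤ (P.card : ℝ) ∧ (P.card : ℝ) ≤ c₂ * n ∧
        c₁ * n ≤ (L.card : ℝ) ∧ (L.card : ℝ) ≤ c₂ * n ∧
        (¬ ∃ (l : Fin 4 → ℝ × ℝ) (p : Fin 4 → ℝ × ℝ),
            Function.Injective l ∧ Function.Injective p ∧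
            (∀ i, l i ∈ L) ∧ (∀ i, p i ∈ P) ∧
            (∀ i, (p i).2 = (l i).1 * (p i).1 + (l i).2 ∧
                  (p i).2 = (l (i + 1)).1 * (p i).1 + (l (i + 1)).2)) ∧
        c₃ * (n : ℝ) ^ ((1 : ℝ) + 1 / 14) ≤
          (((P ×ˢ L).filter fun q => q.1.2 = q.2.1 * q.1.1 + q.2.2).card : ℝ) := by
  refine ⟨1, 2 ^ 46, 1, one_pos, by positivity, one_pos, fun n hn => ?_⟩
  obtain ⟨p, hp, hp2, hn14, hp14, hn15⟩ := exists_prime_pow_fourteen_near hn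
  obtain ⟨P, L, hP, hP', hL, hL', hgrid, hI⟩ := exists_gridFree_of_prime hp hp2
  have hsize : ∀ s : ℕ, p ^ 14 ≤ s → s ≤ 2 ^ 18 * p ^ 14 →
      1 * (n : ℝ) ≤ s ∧ (s : ℝ) ≤ 2 ^ 46 * n := fun s h h' =>
    ⟨by rw [one_mul]; exact hn14.trans (by exact_mod_cast h), calc
      (s : ℝ) ≤ 2 ^ 18 * p ^ 14 := by exact_mod_cast h'
      _ ≤ 2 ^ 18 * (4 ^ 14 * n) := by gcongr
      _ = 2 ^ 46 * n := by ring⟩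
  refine ⟨P, L, (hsize _ hP hP').1, (hsize _ hP hP').2, (hsize _ hL hL').1, (hsize _ hL hL').2,
    hgrid, ?_⟩
  rw [one_mul]
  exact hn15.trans (by exact_mod_cast hI)
end
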